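/- arXiv:2512.24908 — 3 statements merged into one kernel-verified Lean document; each statement's English description precedes it below -/
import Mathlib

section
/- If g : Ω → ℂ is holomorphic on a simply connected open set Ω ⊆ ℂ with 1 + K·|g(z)|² > 0 and g'(z) ≠ 0 for all z ∈ Ω (with K ≤ 0), then the function μ(x,y) = log(2|g'(z)| / (1 + K|g(z)|²)), z = x + iy, satisfies the Liouville equation Δμ + K·e^{2μ} = 0 on Ω, where Δ is the standard Laplacian on ℝ². -/
open Complex Real

/-- Euclidean Laplacian of a function of two real variables. -/
noncomputable def lapl (μ : ℝ → ℝ → ℝ) (x y : ℝ) : ℝ :=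
  deriv (fun s => deriv (fun t => μ t y) s) x +
  deriv (fun s => deriv (fun t => μ x t) s) y
open Complex

private lemma Dre {f : ℝ → ℂ} {f' : ℂ} {x : ℝ} (h : HasDerivAt f f' x) :
    HasDerivAt (fun t => (f t).re) f'.re x := by
  simpa [Function.comp_def] using (Complex.reCLM.hasFDerivAt.comp_hasDerivAt x h)

private lemma DnormSq {f : ℝ → ℂ} {f' : ℂ} {x : ℝ} (h : HasDerivAt f f' x) :
    HasDerivAt (fun t => Complex.normSq (f t)) ((star f' * f x + star (f x) * f').re) x := by
  have h1 : HasDerivAt (fun t => star (f t) * f t) (star f' * f x + star (f x) * f') x :=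
    h.star.mul h
  have h2 := Dre h1
  have he : ∀ w : ℂ, (star w * w).re = Complex.normSq w := by
    intro w
    simp [Complex.star_def, Complex.mul_re, Complex.normSq_apply]
  simpa only [he] using h2

private lemma Dx {F : ℂ → ℂ} {F' : ℂ} {w : ℂ} (h : HasDerivAt F F' w) :
    HasDerivAt (fun t : ℝ => F (↑t + ↑w.im * I)) F' w.re := by
  have h1 : HasDerivAt (fun u : ℂ => F (u + ↑w.im * I)) F' ↑w.re := by
    have h2 : HasDerivAt (fun u : ℂ => u + ↑w.im * I) 1 ↑w.re :=
      (hasDerivAt_id _).add_const _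
    have h3 : HasDerivAt F F' (↑w.re + ↑w.im * I) := by rwa [re_add_im]
    simpa [Function.comp_def] using h3.comp (↑w.re : ℂ) h2
  exact h1.comp_ofReal

private lemma Dy {F : ℂ → ℂ} {F' : ℂ} {w : ℂ} (h : HasDerivAt F F' w) :
    HasDerivAt (fun t : ℝ => F (↑w.re + ↑t * I)) (F' * I) w.im := by
  have h1 : HasDerivAt (fun u : ℂ => F (↑w.re + u * I)) (F' * I) ↑w.im := by
    have h2 : HasDerivAt (fun u : ℂ => ↑w.re + u * I) I ↑w.im := by
      simpa using ((hasDerivAt_id (↑w.im : ℂ)).mul_const I).const_add (↑w.re : ℂ)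
    have h3 : HasDerivAt F F' (↑w.re + ↑w.im * I) := by rwa [re_add_im]
    simpa [Function.comp_def] using h3.comp (↑w.im : ℂ) h2
  exact h1.comp_ofReal

noncomputable def Pfun (K : ℝ) (g : ℂ → ℂ) (w : ℂ) : ℝ :=
  (star (deriv g w) * deriv (deriv g) w).re / Complex.normSq (deriv g w) -
    2 * K * (star (g w) * deriv g w).re / (1 + K * Complex.normSq (g w))

noncomputable def Qfun (K : ℝ) (g : ℂ → ℂ) (w : ℂ) : ℝ :=
  (star (deriv g w) * (deriv (deriv g) w * I)).re / Complex.normSq (deriv g w) -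
    2 * K * (star (g w) * (deriv g w * I)).re / (1 + K * Complex.normSq (g w))

section
variable (Ω : Set ℂ) (hΩ : IsOpen Ω) (K : ℝ) (g : ℂ → ℂ)
  (hg : DifferentiableOn ℂ g Ω)
  (hpos : ∀ z ∈ Ω, 1 + K * (‖g z‖)^2 > 0)
  (hg' : ∀ z ∈ Ω, deriv g z ≠ 0)
  (μ : ℝ → ℝ → ℝ)
  (hμ : ∀ x y : ℝ, μ x y =
    Real.log (2 * ‖deriv g (x + y * Complex.I)‖ /
      (1 + K * (‖g (x + y * Complex.I)‖)^2)))

include hΩ hg hpos hg' hμ in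
lemma split_ev (w : ℂ) (hw : w ∈ Ω) :
    (fun t : ℝ => μ t w.im) =ᶠ[nhds w.re]
      (fun t : ℝ => Real.log 2 +
        Real.log (Complex.normSq (deriv g (↑t + ↑w.im * I))) / 2 -
        Real.log (1 + K * Complex.normSq (g (↑t + ↑w.im * I)))) := by
  have hc : Continuous (fun t : ℝ => (↑t + ↑w.im * I : ℂ)) := by continuity
  have hU : {t : ℝ | (↑t + ↑w.im * I : ℂ) ∈ Ω} ∈ nhds w.re := by
    have := (hΩ.preimage hc).mem_nhds (x := w.re) (by simpa [re_add_im] using hw)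
    exact this
  filter_upwards [hU] with t ht
  rw [hμ t w.im]
  have h1 : (0:ℝ) < ‖deriv g (↑t + ↑w.im * I)‖ := norm_pos_iff.mpr (hg' _ ht)
  have h2 : (0:ℝ) < 1 + K * Complex.normSq (g (↑t + ↑w.im * I)) := by
    have := hpos _ ht; rwa [Complex.sq_norm] at this
  have h3 : Real.log (‖deriv g (↑t + ↑w.im * I)‖) =
      Real.log (Complex.normSq (deriv g (↑t + ↑w.im * I))) / 2 := by
    rw [← Real.log_sqrt (Complex.normSq_nonneg _), Complex.norm_def]
  rw [Complex.sq_norm, Real.log_div (by positivity) (ne_of_gt h2),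
    Real.log_mul two_ne_zero (ne_of_gt h1), h3]
end

section
variable (Ω : Set ℂ) (hΩ : IsOpen Ω) (K : ℝ) (g : ℂ → ℂ)
  (hg : DifferentiableOn ℂ g Ω)
  (hpos : ∀ z ∈ Ω, 1 + K * (‖g z‖)^2 > 0)
  (hg' : ∀ z ∈ Ω, deriv g z ≠ 0)
  (μ : ℝ → ℝ → ℝ)
  (hμ : ∀ x y : ℝ, μ x y =
    Real.log (2 * ‖deriv g (x + y * Complex.I)‖ /
      (1 + K * (‖g (x + y * Complex.I)‖)^2)))

include hΩ hg hpos hg' hμ in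
lemma claim1x (w : ℂ) (hw : w ∈ Ω) :
    HasDerivAt (fun t : ℝ => μ t w.im) (Pfun K g w) w.re := by
  have hmem : Ω ∈ nhds w := hΩ.mem_nhds hw
  have hb := hg' w hw
  have hn : Complex.normSq (deriv g w) ≠ 0 := by
    simpa [Complex.normSq_eq_zero] using hb
  have hs : (0:ℝ) < 1 + K * Complex.normSq (g w) := by
    have := hpos w hw; rwa [Complex.sq_norm] at this
  have hAd : HasDerivAt g (deriv g w) w := (hg.differentiableAt hmem).hasDerivAt
  have hBd : HasDerivAt (deriv g) (deriv (deriv g) w) w :=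
    (((hg.analyticOnNhd hΩ).deriv).differentiableOn.differentiableAt hmem).hasDerivAt
  have hax := Dx hAd
  have hbx := Dx hBd
  have h1 := DnormSq hbx
  rw [re_add_im] at h1
  have h2 := DnormSq hax
  rw [re_add_im] at h2
  have hn' : Complex.normSq (deriv g (↑w.re + ↑w.im * I)) ≠ 0 := by rwa [re_add_im]
  have hs' : (1 : ℝ) + K * Complex.normSq (g (↑w.re + ↑w.im * I)) ≠ 0 := by
    rw [re_add_im]; exact ne_of_gt hs
  have hlog1 := h1.log hn'
  have hlog2 := ((h2.const_mul K).const_add 1).log hs'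
  rw [re_add_im] at hlog1 hlog2
  have hder := ((hlog1.div_const 2).const_add (Real.log 2)).sub hlog2
  have := hder.congr_of_eventuallyEq (split_ev Ω hΩ K g hg hpos hg' μ hμ w hw)
  refine this.congr_deriv ?_
  rw [Pfun]
  set a := g w; set b := deriv g w; set c := deriv (deriv g) w
  simp only [Complex.star_def, Complex.mul_re, Complex.mul_im, Complex.add_re,
    Complex.conj_re, Complex.conj_im]
  field_simp
  ring
end
section
variable (Ω : Set ℂ) (hΩ : IsOpen Ω) (K : ℝ) (g : ℂ → ℂ)
  (hg : DifferentiableOn ℂ g Ω)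
  (hpos : ∀ z ∈ Ω, 1 + K * (‖g z‖)^2 > 0)
  (hg' : ∀ z ∈ Ω, deriv g z ≠ 0)
  (μ : ℝ → ℝ → ℝ)
  (hμ : ∀ x y : ℝ, μ x y =
    Real.log (2 * ‖deriv g (x + y * Complex.I)‖ /
      (1 + K * (‖g (x + y * Complex.I)‖)^2)))

include hΩ hg hpos hg' hμ in
lemma split_evy (w : ℂ) (hw : w ∈ Ω) :
    (fun t : ℝ => μ w.re t) =ᶠ[nhds w.im]
      (fun t : ℝ => Real.log 2 +
        Real.log (Complex.normSq (deriv g (↑w.re + ↑t * I))) / 2 -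
        Real.log (1 + K * Complex.normSq (g (↑w.re + ↑t * I)))) := by
  have hc : Continuous (fun t : ℝ => (↑w.re + ↑t * I : ℂ)) := by continuity
  have hU : {t : ℝ | (↑w.re + ↑t * I : ℂ) ∈ Ω} ∈ nhds w.im :=
    (hΩ.preimage hc).mem_nhds (x := w.im) (by simpa [re_add_im] using hw)
  filter_upwards [hU] with t ht
  rw [hμ w.re t]
  have h1 : (0:ℝ) < ‖deriv g (↑w.re + ↑t * I)‖ := norm_pos_iff.mpr (hg' _ ht)
  have h2 : (0:ℝ) < 1 + K * Complex.normSq (g (↑w.re + ↑t * I)) := by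
    have := hpos _ ht; rwa [Complex.sq_norm] at this
  have h3 : Real.log (‖deriv g (↑w.re + ↑t * I)‖) =
      Real.log (Complex.normSq (deriv g (↑w.re + ↑t * I))) / 2 := by
    rw [← Real.log_sqrt (Complex.normSq_nonneg _), Complex.norm_def]
  rw [Complex.sq_norm, Real.log_div (by positivity) (ne_of_gt h2),
    Real.log_mul two_ne_zero (ne_of_gt h1), h3]

include hΩ hg hpos hg' hμ in
lemma claim1y (w : ℂ) (hw : w ∈ Ω) :
    HasDerivAt (fun t : ℝ => μ w.re t) (Qfun K g w) w.im := by
  have hmem : Ω ∈ nhds w := hΩ.mem_nhds hw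
  have hb := hg' w hw
  have hn : Complex.normSq (deriv g w) ≠ 0 := by
    simpa [Complex.normSq_eq_zero] using hb
  have hs : (0:ℝ) < 1 + K * Complex.normSq (g w) := by
    have := hpos w hw; rwa [Complex.sq_norm] at this
  have hAd : HasDerivAt g (deriv g w) w := (hg.differentiableAt hmem).hasDerivAt
  have hBd : HasDerivAt (deriv g) (deriv (deriv g) w) w :=
    (((hg.analyticOnNhd hΩ).deriv).differentiableOn.differentiableAt hmem).hasDerivAt
  have hax := Dy hAd
  have hbx := Dy hBd
  have h1 := DnormSq hbx
  rw [re_add_im] at h1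
  have h2 := DnormSq hax
  rw [re_add_im] at h2
  have hn' : Complex.normSq (deriv g (↑w.re + ↑w.im * I)) ≠ 0 := by rwa [re_add_im]
  have hs' : (1 : ℝ) + K * Complex.normSq (g (↑w.re + ↑w.im * I)) ≠ 0 := by
    rw [re_add_im]; exact ne_of_gt hs
  have hlog1 := h1.log hn'
  have hlog2 := ((h2.const_mul K).const_add 1).log hs'
  rw [re_add_im] at hlog1 hlog2
  have hder := ((hlog1.div_const 2).const_add (Real.log 2)).sub hlog2
  have := hder.congr_of_eventuallyEq (split_evy Ω hΩ K g hg hpos hg' μ hμ w hw)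
  refine this.congr_deriv ?_
  rw [Qfun]
  set a := g w; set b := deriv g w; set c := deriv (deriv g) w
  simp only [Complex.star_def, Complex.mul_re, Complex.mul_im, Complex.add_re,
    Complex.conj_re, Complex.conj_im, Complex.I_re, Complex.I_im]
  field_simp
  ring
end
section
variable (Ω : Set ℂ) (hΩ : IsOpen Ω) (K : ℝ) (g : ℂ → ℂ)
  (hg : DifferentiableOn ℂ g Ω)
  (hpos : ∀ z ∈ Ω, 1 + K * (‖g z‖)^2 > 0)
  (hg' : ∀ z ∈ Ω, deriv g z ≠ 0)

include hΩ hg hpos hg' in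
lemma claim2x (z : ℂ) (hz : z ∈ Ω) :
    HasDerivAt (fun t : ℝ => Pfun K g (↑t + ↑z.im * I))
      (((star (deriv (deriv g) z) * deriv (deriv g) z +
          star (deriv g z) * deriv (deriv (deriv g)) z).re * Complex.normSq (deriv g z) -
         (star (deriv g z) * deriv (deriv g) z).re *
           (star (deriv (deriv g) z) * deriv g z + star (deriv g z) * deriv (deriv g) z).re) /
        (Complex.normSq (deriv g z))^2 -
       (2 * K * (star (deriv g z) * deriv g z + star (g z) * deriv (deriv g) z).re *
          (1 + K * Complex.normSq (g z)) -
         2 * K * (star (g z) * deriv g z).re *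
           (K * (star (deriv g z) * g z + star (g z) * deriv g z).re)) /
        (1 + K * Complex.normSq (g z))^2) z.re := by
  have hmem : Ω ∈ nhds z := hΩ.mem_nhds hz
  have hn : Complex.normSq (deriv g z) ≠ 0 := by
    simpa [Complex.normSq_eq_zero] using hg' z hz
  have hs : (0:ℝ) < 1 + K * Complex.normSq (g z) := by
    have := hpos z hz; rwa [Complex.sq_norm] at this
  have hAn := hg.analyticOnNhd hΩ
  have hAd : HasDerivAt g (deriv g z) z := (hg.differentiableAt hmem).hasDerivAt
  have hBd : HasDerivAt (deriv g) (deriv (deriv g) z) z :=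
    (hAn.deriv.differentiableOn.differentiableAt hmem).hasDerivAt
  have hCd : HasDerivAt (deriv (deriv g)) (deriv (deriv (deriv g)) z) z :=
    (hAn.deriv.deriv.differentiableOn.differentiableAt hmem).hasDerivAt
  have hax := Dx hAd
  have hbx := Dx hBd
  have hcx := Dx hCd
  have num1 := Dre (hbx.star.mul hcx)
  rw [re_add_im] at num1
  have den1 := DnormSq hbx
  rw [re_add_im] at den1
  have hn' : Complex.normSq (deriv g (↑z.re + ↑z.im * I)) ≠ 0 := by rwa [re_add_im]
  have hs' : (1:ℝ) + K * Complex.normSq (g (↑z.re + ↑z.im * I)) ≠ 0 := by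
    rw [re_add_im]; exact ne_of_gt hs
  have frac1 := num1.div den1 hn'
  rw [re_add_im] at frac1
  have num2 := (Dre (hax.star.mul hbx)).const_mul (2*K)
  rw [re_add_im] at num2
  have den2 := ((DnormSq hax).const_mul K).const_add 1
  rw [re_add_im] at den2
  have frac2 := num2.div den2 hs'
  rw [re_add_im] at frac2
  have total := frac1.sub frac2
  simp only [Pi.mul_apply, re_add_im] at total
  simp only [Pfun]
  exact total
end
section
variable (Ω : Set ℂ) (hΩ : IsOpen Ω) (K : ℝ) (g : ℂ → ℂ)
  (hg : DifferentiableOn ℂ g Ω)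
  (hpos : ∀ z ∈ Ω, 1 + K * (‖g z‖)^2 > 0)
  (hg' : ∀ z ∈ Ω, deriv g z ≠ 0)

include hΩ hg hpos hg' in
lemma claim2y (z : ℂ) (hz : z ∈ Ω) :
    HasDerivAt (fun t : ℝ => Qfun K g (↑z.re + ↑t * I))
      (((star (deriv (deriv g) z * I) * (deriv (deriv g) z * I) +
          star (deriv g z) * (deriv (deriv (deriv g)) z * I * I)).re *
            Complex.normSq (deriv g z) -
         (star (deriv g z) * (deriv (deriv g) z * I)).re *
           (star (deriv (deriv g) z * I) * deriv g z +
            star (deriv g z) * (deriv (deriv g) z * I)).re) /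
        (Complex.normSq (deriv g z))^2 -
       (2 * K * (star (deriv g z * I) * (deriv g z * I) +
            star (g z) * (deriv (deriv g) z * I * I)).re *
          (1 + K * Complex.normSq (g z)) -
         2 * K * (star (g z) * (deriv g z * I)).re *
           (K * (star (deriv g z * I) * g z + star (g z) * (deriv g z * I)).re)) /
        (1 + K * Complex.normSq (g z))^2) z.im := by
  have hmem : Ω ∈ nhds z := hΩ.mem_nhds hz
  have hn : Complex.normSq (deriv g z) ≠ 0 := by
    simpa [Complex.normSq_eq_zero] using hg' z hz
  have hs : (0:ℝ) < 1 + K * Complex.normSq (g z) := by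
    have := hpos z hz; rwa [Complex.sq_norm] at this
  have hAn := hg.analyticOnNhd hΩ
  have hAd : HasDerivAt g (deriv g z) z := (hg.differentiableAt hmem).hasDerivAt
  have hBd : HasDerivAt (deriv g) (deriv (deriv g) z) z :=
    (hAn.deriv.differentiableOn.differentiableAt hmem).hasDerivAt
  have hCd : HasDerivAt (deriv (deriv g)) (deriv (deriv (deriv g)) z) z :=
    (hAn.deriv.deriv.differentiableOn.differentiableAt hmem).hasDerivAt
  have hay := Dy hAd
  have hby := Dy hBd
  have hcy := Dy hCd
  have num1 := Dre (hby.star.mul (hcy.mul_const I))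
  rw [re_add_im] at num1
  have den1 := DnormSq hby
  rw [re_add_im] at den1
  have hn' : Complex.normSq (deriv g (↑z.re + ↑z.im * I)) ≠ 0 := by rwa [re_add_im]
  have hs' : (1:ℝ) + K * Complex.normSq (g (↑z.re + ↑z.im * I)) ≠ 0 := by
    rw [re_add_im]; exact ne_of_gt hs
  have frac1 := num1.div den1 hn'
  rw [re_add_im] at frac1
  have num2 := (Dre (hay.star.mul (hby.mul_const I))).const_mul (2*K)
  rw [re_add_im] at num2
  have den2 := ((DnormSq hay).const_mul K).const_add 1
  rw [re_add_im] at den2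
  have frac2 := num2.div den2 hs'
  rw [re_add_im] at frac2
  have total := frac1.sub frac2
  simp only [Pi.mul_apply, re_add_im] at total
  simp only [Qfun]
  exact total
end
theorem liouville_formula_gives_solution
    (Ω : Set ℂ) (hΩ : IsOpen Ω) (hsc : SimplyConnectedSpace Ω)
    (K : ℝ) (hK : K ≤ 0)
    (g : ℂ → ℂ) (hg : DifferentiableOn ℂ g Ω)
    (hpos : ∀ z ∈ Ω, 1 + K * (‖g z‖)^2 > 0)
    (hg' : ∀ z ∈ Ω, deriv g z ≠ 0)
    (μ : ℝ → ℝ → ℝ)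
    (hμ : ∀ x y : ℝ, μ x y =
      Real.log (2 * ‖deriv g (x + y * Complex.I)‖ /
        (1 + K * (‖g (x + y * Complex.I)‖)^2))) :
    ∀ z ∈ Ω, lapl μ z.re z.im + K * Real.exp (2 * μ z.re z.im) = 0 := by
  intro z hz
  have hn : Complex.normSq (deriv g z) ≠ 0 := by
    simpa [Complex.normSq_eq_zero] using hg' z hz
  have hs : (0:ℝ) < 1 + K * Complex.normSq (g z) := by
    have := hpos z hz; rwa [Complex.sq_norm] at this
  -- first Laplacian term
  have e1 : deriv (fun s => deriv (fun t => μ t z.im) s) z.re =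
      deriv (fun s : ℝ => Pfun K g (↑s + ↑z.im * Complex.I)) z.re := by
    apply Filter.EventuallyEq.deriv_eq
    have hc : Continuous (fun t : ℝ => (↑t + ↑z.im * Complex.I : ℂ)) := by continuity
    have hU : {t : ℝ | (↑t + ↑z.im * Complex.I : ℂ) ∈ Ω} ∈ nhds z.re :=
      (hΩ.preimage hc).mem_nhds (x := z.re) (by simpa [Complex.re_add_im] using hz)
    filter_upwards [hU] with s hs2
    have := (claim1x Ω hΩ K g hg hpos hg' μ hμ (↑s + ↑z.im * Complex.I) hs2).deriv
    simpa using this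
  have e2 : deriv (fun s => deriv (fun t => μ z.re t) s) z.im =
      deriv (fun s : ℝ => Qfun K g (↑z.re + ↑s * Complex.I)) z.im := by
    apply Filter.EventuallyEq.deriv_eq
    have hc : Continuous (fun t : ℝ => (↑z.re + ↑t * Complex.I : ℂ)) := by continuity
    have hU : {t : ℝ | (↑z.re + ↑t * Complex.I : ℂ) ∈ Ω} ∈ nhds z.im :=
      (hΩ.preimage hc).mem_nhds (x := z.im) (by simpa [Complex.re_add_im] using hz)
    filter_upwards [hU] with s hs2
    have := (claim1y Ω hΩ K g hg hpos hg' μ hμ (↑z.re + ↑s * Complex.I) hs2).deriv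
    simpa using this
  have d1 := (claim2x Ω hΩ K g hg hpos hg' z hz).deriv
  have d2 := (claim2y Ω hΩ K g hg hpos hg' z hz).deriv
  have hexp : Real.exp (2 * μ z.re z.im) =
      4 * Complex.normSq (deriv g z) / (1 + K * Complex.normSq (g z))^2 := by
    have habs : (0:ℝ) < ‖deriv g z‖ := norm_pos_iff.mpr (hg' z hz)
    have hpos' : (0:ℝ) < 2 * ‖deriv g z‖ / (1 + K * Complex.normSq (g z)) := by
      positivity
    rw [hμ z.re z.im]
    simp only [Complex.re_add_im]
    rw [Complex.sq_norm, two_mul, Real.exp_add, Real.exp_log hpos', div_mul_div_comm]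
    rw [show 2 * ‖deriv g z‖ * (2 * ‖deriv g z‖) =
      4 * (‖deriv g z‖ * ‖deriv g z‖) from by ring]
    rw [show ‖deriv g z‖ * ‖deriv g z‖ =
      Complex.normSq (deriv g z) from by rw [← Complex.sq_norm]; ring]
    rw [sq]
  rw [lapl, e1, e2, d1, d2, hexp]
  set a := g z; set b := deriv g z; set c := deriv (deriv g) z
  set d := deriv (deriv (deriv g)) z
  simp only [Complex.star_def, Complex.mul_re, Complex.mul_im, Complex.add_re, Complex.add_im,
    Complex.conj_re, Complex.conj_im, Complex.I_re, Complex.I_im, Complex.normSq_apply]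
  have hn2 : b.re * b.re + b.im * b.im ≠ 0 := by
    simpa [Complex.normSq_apply] using hn
  have hs2 : (1:ℝ) + K * (a.re * a.re + a.im * a.im) ≠ 0 := by
    have := ne_of_gt hs; simpa [Complex.normSq_apply] using this
  field_simp
  ring
end

section
/- The function μ(x,y) = -(1/2)·log(|z|·(1 + K|z|)²), where z = x + iy, solves the Liouville equation Δμ + K·e^{2μ} = 0 on the punctured disk D* = {z ∈ ℂ : 0 < |z| < 1}. -/
open Complex Real

/-- Smooth form of the solution off the origin. -/
noncomputable def gg (K a b : ℝ) : ℝ :=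
  -(1/2) * Real.log (Real.sqrt (a^2+b^2)) - Real.log (1 + K * Real.sqrt (a^2+b^2))

/-- First partial derivative of `gg` in the first variable. -/
noncomputable def PP (K a b : ℝ) : ℝ :=
  -a/(2*(a^2+b^2)) - K*a/(Real.sqrt (a^2+b^2) * (1 + K * Real.sqrt (a^2+b^2)))

/-- Second partial derivative of `gg` in the first variable. -/
noncomputable def DD (K a b : ℝ) : ℝ :=
  (a^2-b^2)/(2*(a^2+b^2)^2)
  - K*(Real.sqrt (a^2+b^2) + K*(Real.sqrt (a^2+b^2))^2
      - a^2*(1+2*K*Real.sqrt (a^2+b^2))/Real.sqrt (a^2+b^2))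
    /(Real.sqrt (a^2+b^2)*(1+K*Real.sqrt (a^2+b^2)))^2

lemma sqrt_hasDerivAt (x y : ℝ) (hq : 0 < x^2+y^2) :
    HasDerivAt (fun t => Real.sqrt (t^2+y^2)) (x / Real.sqrt (x^2+y^2)) x := by
  have h1 : HasDerivAt (fun t : ℝ => t^2+y^2) (2*x) x := by
    simpa using (hasDerivAt_pow 2 x).add_const (y^2)
  have h2 := (Real.hasDerivAt_sqrt hq.ne').comp x h1
  have hs : Real.sqrt (x^2+y^2) ≠ 0 := (Real.sqrt_pos.2 hq).ne'
  refine h2.congr_deriv ?_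
  field_simp

lemma gg_hasDerivAt (K x y : ℝ) (hq : 0 < x^2+y^2)
    (hpos : 0 < 1 + K * Real.sqrt (x^2+y^2)) :
    HasDerivAt (fun t => gg K t y) (PP K x y) x := by
  have hs0 : 0 < Real.sqrt (x^2+y^2) := Real.sqrt_pos.2 hq
  have hsq := sqrt_hasDerivAt x y hq
  have h3 : HasDerivAt (fun t => Real.log (Real.sqrt (t^2+y^2)))
      ((Real.sqrt (x^2+y^2))⁻¹ * (x / Real.sqrt (x^2+y^2))) x :=
    by have := (Real.hasDerivAt_log hs0.ne').comp x hsq; exact this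
  have h4 : HasDerivAt (fun t => Real.log (1 + K * Real.sqrt (t^2+y^2)))
      ((1 + K * Real.sqrt (x^2+y^2))⁻¹ * (K * (x / Real.sqrt (x^2+y^2)))) x :=
    by have := (Real.hasDerivAt_log hpos.ne').comp x ((hsq.const_mul K).const_add 1); exact this
  have h5 := (h3.const_mul (-(1/2))).sub h4
  refine h5.congr_deriv ?_
  unfold PP
  set s := Real.sqrt (x^2+y^2) with hsdef
  have hs2 : s^2 = x^2+y^2 := Real.sq_sqrt hq.le
  rw [← hs2]
  field_simp

lemma PP_hasDerivAt (K x y : ℝ) (hq : 0 < x^2+y^2)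
    (hpos : 0 < 1 + K * Real.sqrt (x^2+y^2)) :
    HasDerivAt (fun t => PP K t y) (DD K x y) x := by
  have hs0 : 0 < Real.sqrt (x^2+y^2) := Real.sqrt_pos.2 hq
  have hsq := sqrt_hasDerivAt x y hq
  have h1 : HasDerivAt (fun t : ℝ => 2*(t^2+y^2)) (2*(2*x)) x := by
    simpa using ((hasDerivAt_pow 2 x).add_const (y^2)).const_mul 2
  have ha : HasDerivAt (fun t : ℝ => -t) (-1 : ℝ) x := by
    exact hasDerivAt_neg' x
  have hA := ha.div h1 (by positivity)
  have hden : HasDerivAt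
      (fun t => Real.sqrt (t^2+y^2) * (1 + K * Real.sqrt (t^2+y^2)))
      ((x / Real.sqrt (x^2+y^2)) * (1 + K * Real.sqrt (x^2+y^2))
        + Real.sqrt (x^2+y^2) * (K * (x / Real.sqrt (x^2+y^2)))) x :=
    hsq.mul ((hsq.const_mul K).const_add 1)
  have hnum : HasDerivAt (fun t : ℝ => K*t) K x := by
    simpa using (hasDerivAt_id x).const_mul K
  have hB := hnum.div hden (by positivity)
  have h5 := hA.sub hB
  refine h5.congr_deriv ?_
  unfold DD
  set s := Real.sqrt (x^2+y^2) with hsdef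
  have hne : s ≠ 0 := hs0.ne'
  have hne2 : (1 : ℝ) + K*s ≠ 0 := hpos.ne'
  have hqne : x^2+y^2 ≠ 0 := hq.ne'
  field_simp
  ring

lemma exp_two_gg (K x y : ℝ) (hq : 0 < x^2+y^2)
    (hpos : 0 < 1 + K * Real.sqrt (x^2+y^2)) :
    Real.exp (2 * gg K x y)
      = 1 / (Real.sqrt (x^2+y^2) * (1 + K * Real.sqrt (x^2+y^2))^2) := by
  have hs0 : 0 < Real.sqrt (x^2+y^2) := Real.sqrt_pos.2 hq
  set s := Real.sqrt (x^2+y^2) with hsdef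
  have hT : 0 < s * (1+K*s)^2 := by positivity
  have : 2 * gg K x y = -Real.log (s * (1+K*s)^2) := by
    rw [gg, Real.log_mul hs0.ne' (by positivity), Real.log_pow]
    push_cast
    ring
  rw [this, Real.exp_neg, Real.exp_log hT]
  simp [one_div]

lemma DD_sum (K x y : ℝ) (hq : 0 < x^2+y^2)
    (hpos : 0 < 1 + K * Real.sqrt (x^2+y^2)) :
    DD K x y + DD K y x
      + K * (1 / (Real.sqrt (x^2+y^2) * (1 + K * Real.sqrt (x^2+y^2))^2)) = 0 := by
  have hs0 : 0 < Real.sqrt (x^2+y^2) := Real.sqrt_pos.2 hq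
  have hcomm : y^2 + x^2 = x^2 + y^2 := add_comm _ _
  unfold DD
  rw [hcomm]
  set s := Real.sqrt (x^2+y^2) with hsdef
  have hs2 : s^2 = x^2+y^2 := Real.sq_sqrt hq.le
  have hy2 : y^2 = s^2 - x^2 := by linarith
  rw [hy2]
  have hne : s ≠ 0 := hs0.ne'
  have hne2 : (1 : ℝ) + K*s ≠ 0 := hpos.ne'
  field_simp
  ring

theorem punctured_disk_solution
    (K : ℝ)
    (hK : ∀ z : ℂ, 0 < ‖z‖ → ‖z‖ < 1 → 1 + K * ‖z‖ > 0)
    (μ : ℝ → ℝ → ℝ)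
    (hμ : ∀ x y : ℝ, μ x y =
      -(1/2) * Real.log (‖(x + y * Complex.I : ℂ)‖ *
        (1 + K * ‖(x + y * Complex.I : ℂ)‖)^2)) :
    ∀ z : ℂ, 0 < ‖z‖ → ‖z‖ < 1 →
      lapl μ z.re z.im + K * Real.exp (2 * μ z.re z.im) = 0 := by
  -- positivity of 1 + K√q on the punctured disk, in real coordinates
  have hKr : ∀ a b : ℝ, 0 < a^2+b^2 → a^2+b^2 < 1 →
      0 < 1 + K * Real.sqrt (a^2+b^2) := by
    intro a b h0 h1
    have := hK (a + b*Complex.I)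
      (by rw [Complex.norm_add_mul_I]; exact Real.sqrt_pos.2 h0)
      (by rw [Complex.norm_add_mul_I]
          have := Real.sqrt_lt_sqrt (le_of_lt h0) h1
          simpa using this)
    rw [Complex.norm_add_mul_I] at this
    linarith
  -- μ agrees with gg on the punctured disk
  have hmug : ∀ a b : ℝ, 0 < a^2+b^2 → a^2+b^2 < 1 → μ a b = gg K a b := by
    intro a b h0 h1
    have hs0 : 0 < Real.sqrt (a^2+b^2) := Real.sqrt_pos.2 h0
    have hp := hKr a b h0 h1
    rw [hμ, Complex.norm_add_mul_I, gg,
      Real.log_mul hs0.ne' (by positivity), Real.log_pow]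
    push_cast
    ring
  intro z hz0 hz1
  set x := z.re
  set y := z.im
  have hq0 : 0 < x^2 + y^2 := by
    have : ‖(x + y*Complex.I : ℂ)‖ = ‖z‖ := by
      rw [Complex.re_add_im]
    rw [Complex.norm_add_mul_I] at this
    nlinarith [Real.sq_sqrt (by positivity : (0:ℝ) ≤ x^2+y^2), this ▸ hz0]
  have hq1 : x^2 + y^2 < 1 := by
    have he : ‖(x + y*Complex.I : ℂ)‖ = ‖z‖ := by
      rw [Complex.re_add_im]
    rw [Complex.norm_add_mul_I] at he
    nlinarith [Real.sq_sqrt (by positivity : (0:ℝ) ≤ x^2+y^2), he ▸ hz1,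
      Real.sqrt_nonneg (x^2+y^2)]
  -- open sets for the two slices
  have hopen : ∀ c : ℝ, IsOpen {t : ℝ | 0 < t^2+c^2 ∧ t^2+c^2 < 1} := by
    intro c
    have hc : Continuous fun t : ℝ => t^2 + c^2 :=
      (continuous_pow 2).add continuous_const
    exact (isOpen_lt continuous_const hc).inter (isOpen_lt hc continuous_const)
  -- inner deriv in x-direction
  have hdx : ∀ t ∈ {t : ℝ | 0 < t^2+y^2 ∧ t^2+y^2 < 1},
      deriv (fun u => μ u y) t = PP K t y := by
    intro t ht
    have hev : (fun u => μ u y) =ᶠ[nhds t] (fun u => gg K u y) :=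
      Filter.eventually_of_mem ((hopen y).mem_nhds ht)
        (fun u hu => hmug u y hu.1 hu.2)
    rw [hev.deriv_eq]
    exact (gg_hasDerivAt K t y ht.1 (hKr t y ht.1 ht.2)).deriv
  have houterx : deriv (fun s => deriv (fun t => μ t y) s) x = DD K x y := by
    have hev : (fun s => deriv (fun t => μ t y) s) =ᶠ[nhds x]
        (fun s => PP K s y) :=
      Filter.eventually_of_mem ((hopen y).mem_nhds ⟨hq0, hq1⟩)
        (fun s hs => hdx s hs)
    rw [hev.deriv_eq]
    exact (PP_hasDerivAt K x y hq0 (hKr x y hq0 hq1)).deriv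
  -- inner deriv in y-direction
  have hmug' : ∀ t : ℝ, 0 < t^2+x^2 → t^2+x^2 < 1 → μ x t = gg K t x := by
    intro t h0 h1
    have h0' : 0 < x^2+t^2 := by linarith [sq_nonneg t, sq_nonneg x,
      (by linarith : 0 < t^2+x^2)]
    rw [hmug x t (by linarith) (by linarith), gg, gg, add_comm (x^2)]
  have hdy : ∀ t ∈ {t : ℝ | 0 < t^2+x^2 ∧ t^2+x^2 < 1},
      deriv (fun u => μ x u) t = PP K t x := by
    intro t ht
    have hev : (fun u => μ x u) =ᶠ[nhds t] (fun u => gg K u x) :=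
      Filter.eventually_of_mem ((hopen x).mem_nhds ht)
        (fun u hu => hmug' u hu.1 hu.2)
    rw [hev.deriv_eq]
    exact (gg_hasDerivAt K t x ht.1 (hKr t x ht.1 ht.2)).deriv
  have houtery : deriv (fun s => deriv (fun t => μ x t) s) y = DD K y x := by
    have hmem : y ∈ {t : ℝ | 0 < t^2+x^2 ∧ t^2+x^2 < 1} := by
      constructor <;> [linarith; linarith]
    have hev : (fun s => deriv (fun t => μ x t) s) =ᶠ[nhds y]
        (fun s => PP K s x) :=
      Filter.eventually_of_mem ((hopen x).mem_nhds hmem)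
        (fun s hs => hdy s hs)
    rw [hev.deriv_eq]
    exact (PP_hasDerivAt K y x (by linarith)
      (hKr y x (by linarith) (by linarith))).deriv
  have hp := hKr x y hq0 hq1
  have hexp : Real.exp (2 * μ x y)
      = 1 / (Real.sqrt (x^2+y^2) * (1 + K * Real.sqrt (x^2+y^2))^2) := by
    rw [hmug x y hq0 hq1]
    exact exp_two_gg K x y hq0 hp
  rw [lapl, houterx, houtery, hexp]
  exact DD_sum K x y hq0 hp
end

section
/- Let g be a holomorphic function on an open Ω ⊆ ℂ with g'(z) ≠ 0 and |g(z)| ≠ 1 for all z ∈ Ω, and define λ by e^{2λ} = (1 − |g|²)²/(4|g'|²). Then λ satisfies the Liouville equation Δλ = −e^{−4λ}, where Δ = 4e^{−2λ}·∂²/∂z∂z̄ is the Laplace–Beltrami operator of the metric e^{2λ}(dx² + dy²); equivalently, 4λ_{zz̄} = −e^{−2λ}. -/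
open Complex Real

noncomputable section LiouAux

def dotp (u v : ℂ) : ℝ := u.re * v.re + u.im * v.im

lemma hd_cre {F : ℝ → ℂ} {F' : ℂ} {t : ℝ} (h : HasDerivAt F F' t) :
    HasDerivAt (fun s => (F s).re) F'.re t := by
  exact Complex.reCLM.hasFDerivAt.comp_hasDerivAt t h

lemma hd_cim {F : ℝ → ℂ} {F' : ℂ} {t : ℝ} (h : HasDerivAt F F' t) :
    HasDerivAt (fun s => (F s).im) F'.im t := by
  exact Complex.imCLM.hasFDerivAt.comp_hasDerivAt t h

lemma hd_dotp {F H : ℝ → ℂ} {F' H' : ℂ} {t : ℝ}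
    (hF : HasDerivAt F F' t) (hH : HasDerivAt H H' t) :
    HasDerivAt (fun s => dotp (F s) (H s)) (dotp F' (H t) + dotp (F t) H') t := by
  have h := ((hd_cre hF).mul (hd_cre hH)).add ((hd_cim hF).mul (hd_cim hH))
  exact h.congr_deriv (by simp only [dotp]; ring)

lemma hd_curve {f : ℂ → ℂ} {c z₀ e : ℂ} {t : ℝ}
    (hf : HasDerivAt f c (z₀ + t * e)) :
    HasDerivAt (fun s : ℝ => f (z₀ + s * e)) (e * c) t := by
  have h1 : HasDerivAt (fun s : ℝ => (s : ℂ)) 1 t := by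
    exact Complex.ofRealCLM.hasDerivAt (x := t)
  have hγ : HasDerivAt (fun s : ℝ => z₀ + (s : ℂ) * e) e t := by
    simpa using (h1.mul_const e).const_add z₀
  have h2 := (hf.hasFDerivAt.restrictScalars ℝ).comp_hasDerivAt t hγ
  exact h2

/-- value-level first-order quantity: derivative of `normSq ∘ g` along direction `e`,
where `a = g w`, `b = g' w`. -/
def PPv (a b e : ℂ) : ℝ := 2 * dotp a (e * b)

/-- derivative of `PPv` along the curve. -/
def PPv' (a b c e : ℂ) : ℝ := 2 * (dotp (e * b) (e * b) + dotp a (e * (e * c)))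

def uuv (a b : ℂ) : ℝ :=
  (1 / 2) * Real.log ((1 - Complex.normSq a) ^ 2 / (4 * Complex.normSq b))

def F1v (a b c e : ℂ) : ℝ :=
  -(PPv a b e) / (1 - Complex.normSq a) - PPv b c e / (2 * Complex.normSq b)

def F2v (a b c d e : ℂ) : ℝ :=
  ((-(PPv' a b c e)) * (1 - Complex.normSq a) - (-(PPv a b e)) * (-(PPv a b e))) /
      (1 - Complex.normSq a) ^ 2
  - ((PPv' b c d e) * (2 * Complex.normSq b) - PPv b c e * (2 * PPv b c e)) /
      (2 * Complex.normSq b) ^ 2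

section Curves

variable {g g1 g2 g3 : ℂ → ℂ} {z₀ e : ℂ} {t : ℝ}

/-- derivative of `s ↦ normSq (g (z₀ + s e))`. -/
lemma hd_normSq_curve (h0 : HasDerivAt g (g1 (z₀ + t * e)) (z₀ + t * e)) :
    HasDerivAt (fun s : ℝ => Complex.normSq (g (z₀ + s * e)))
      (PPv (g (z₀ + t * e)) (g1 (z₀ + t * e)) e) t := by
  have hG : HasDerivAt (fun s : ℝ => g (z₀ + s * e)) (e * g1 (z₀ + t * e)) t := hd_curve h0
  have h := hd_dotp hG hG
  exact h.congr_deriv (by simp only [PPv, dotp]; ring)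


lemma hd_PPv_curve (h0 : HasDerivAt g (g1 (z₀ + t * e)) (z₀ + t * e))
    (h1 : HasDerivAt g1 (g2 (z₀ + t * e)) (z₀ + t * e)) :
    HasDerivAt (fun s : ℝ => PPv (g (z₀ + s * e)) (g1 (z₀ + s * e)) e)
      (PPv' (g (z₀ + t * e)) (g1 (z₀ + t * e)) (g2 (z₀ + t * e)) e) t := by
  have hG : HasDerivAt (fun s : ℝ => g (z₀ + s * e)) (e * g1 (z₀ + t * e)) t := hd_curve h0
  have hG1 : HasDerivAt (fun s : ℝ => e * g1 (z₀ + s * e)) (e * (e * g2 (z₀ + t * e))) t :=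
    (hd_curve h1).const_mul e
  have h := (hd_dotp hG hG1).const_mul 2
  exact h

end Curves


section Main

variable {g g1 g2 g3 : ℂ → ℂ} {Ω : Set ℂ} (hΩ : IsOpen Ω)
variable (hd0 : ∀ w ∈ Ω, HasDerivAt g (g1 w) w)
variable (hd1 : ∀ w ∈ Ω, HasDerivAt g1 (g2 w) w)
variable (hd2 : ∀ w ∈ Ω, HasDerivAt g2 (g3 w) w)
variable (hb : ∀ w ∈ Ω, g1 w ≠ 0)
variable (ha : ∀ w ∈ Ω, Complex.normSq (g w) ≠ 1)

include hΩ hd0 hd1 hb ha in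
lemma hd_uu_curve {z₀ e : ℂ} {t : ℝ} (hw : z₀ + t * e ∈ Ω) :
    HasDerivAt (fun s : ℝ => uuv (g (z₀ + s * e)) (g1 (z₀ + s * e)))
      (F1v (g (z₀ + t * e)) (g1 (z₀ + t * e)) (g2 (z₀ + t * e)) e) t := by
  set w := z₀ + t * e with hwdef
  have hA1 : (1 : ℝ) - Complex.normSq (g w) ≠ 0 := sub_ne_zero.mpr (Ne.symm (ha w hw))
  have hB0 : Complex.normSq (g1 w) ≠ 0 := (Complex.normSq_pos.mpr (hb w hw)).ne'
  have hnum : HasDerivAt (fun s : ℝ => (1 - Complex.normSq (g (z₀ + s * e))) ^ 2)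
      (2 * (1 - Complex.normSq (g w)) ^ 1 * (-(PPv (g w) (g1 w) e))) t :=
    ((hd_normSq_curve (hd0 w hw)).const_sub 1).pow 2
  have hden : HasDerivAt (fun s : ℝ => 4 * Complex.normSq (g1 (z₀ + s * e)))
      (4 * PPv (g1 w) (g2 w) e) t := (hd_normSq_curve (hd1 w hw)).const_mul 4
  have hlog1 := hnum.log (pow_ne_zero 2 hA1)
  have hlog2 := hden.log (by positivity)
  have h := (hlog1.sub hlog2).const_mul ((1:ℝ)/2)
  have heq : (fun s : ℝ => uuv (g (z₀ + s * e)) (g1 (z₀ + s * e))) =ᶠ[nhds t]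
      (fun s : ℝ => (1/2) * (Real.log ((1 - Complex.normSq (g (z₀ + s * e))) ^ 2)
        - Real.log (4 * Complex.normSq (g1 (z₀ + s * e))))) := by
    have hOp : IsOpen {s : ℝ | z₀ + (s : ℂ) * e ∈ Ω} :=
      hΩ.preimage (by fun_prop)
    filter_upwards [hOp.mem_nhds hw] with s hs
    have h1 : (1 : ℝ) - Complex.normSq (g (z₀ + s * e)) ≠ 0 :=
      sub_ne_zero.mpr (Ne.symm (ha _ hs))
    have h2 : (4 : ℝ) * Complex.normSq (g1 (z₀ + s * e)) ≠ 0 := by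
      have := (Complex.normSq_pos.mpr (hb _ hs)).ne'; positivity
    simp [uuv, Real.log_div (pow_ne_zero 2 h1) h2]
  refine HasDerivAt.congr_of_eventuallyEq ?_ heq
  refine h.congr_deriv ?_
  rw [← hwdef]
  simp only [F1v]
  field_simp

include hd0 hd1 hd2 hb ha in
lemma hd_F1_curve {z₀ e : ℂ} {t : ℝ} (hw : z₀ + t * e ∈ Ω) :
    HasDerivAt (fun s : ℝ => F1v (g (z₀ + s * e)) (g1 (z₀ + s * e)) (g2 (z₀ + s * e)) e)
      (F2v (g (z₀ + t * e)) (g1 (z₀ + t * e)) (g2 (z₀ + t * e)) (g3 (z₀ + t * e)) e) t := by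
  set w := z₀ + t * e with hwdef
  have hA1 : (1 : ℝ) - Complex.normSq (g w) ≠ 0 := sub_ne_zero.mpr (Ne.symm (ha w hw))
  have hB0 : (2 : ℝ) * Complex.normSq (g1 w) ≠ 0 := by
    have := (Complex.normSq_pos.mpr (hb w hw)).ne'; positivity
  have h1 : HasDerivAt (fun s : ℝ => -(PPv (g (z₀ + s * e)) (g1 (z₀ + s * e)) e))
      (-(PPv' (g w) (g1 w) (g2 w) e)) t := (hd_PPv_curve (hd0 w hw) (hd1 w hw)).neg
  have h2 : HasDerivAt (fun s : ℝ => 1 - Complex.normSq (g (z₀ + s * e)))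
      (-(PPv (g w) (g1 w) e)) t := (hd_normSq_curve (hd0 w hw)).const_sub 1
  have h3 : HasDerivAt (fun s : ℝ => PPv (g1 (z₀ + s * e)) (g2 (z₀ + s * e)) e)
      (PPv' (g1 w) (g2 w) (g3 w) e) t := hd_PPv_curve (hd1 w hw) (hd2 w hw)
  have h4 : HasDerivAt (fun s : ℝ => 2 * Complex.normSq (g1 (z₀ + s * e)))
      (2 * PPv (g1 w) (g2 w) e) t := (hd_normSq_curve (hd1 w hw)).const_mul 2
  exact (h1.div h2 hA1).sub (h3.div h4 hB0)

end Main

lemma F2v_sum (a b c d : ℂ) (h1 : (1 : ℝ) - Complex.normSq a ≠ 0)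
    (h2 : Complex.normSq b ≠ 0) :
    F2v a b c d 1 + F2v a b c d Complex.I
      = -(4 * Complex.normSq b / (1 - Complex.normSq a) ^ 2) := by
  simp only [F2v, PPv, PPv', dotp, Complex.normSq_apply, Complex.mul_re, Complex.mul_im,
    Complex.I_re, Complex.I_im, Complex.one_re, Complex.one_im] at *
  field_simp
  ring

end LiouAux

theorem liouville_from_meromorphic_data
    (Ω : Set ℂ) (hΩ : IsOpen Ω)
    (g : ℂ → ℂ) (hg : DifferentiableOn ℂ g Ω)
    (hg' : ∀ z ∈ Ω, deriv g z ≠ 0)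
    (hg1 : ∀ z ∈ Ω, ‖g z‖ ≠ 1)
    (lam : ℝ → ℝ → ℝ)
    (hlam : ∀ x y : ℝ, lam x y = (1 / 2) * Real.log
      ((1 - Complex.normSq (g (x + y * Complex.I))) ^ 2 /
        (4 * Complex.normSq (deriv g (x + y * Complex.I))))) :
    -- `λ_xx + λ_yy = 4 λ_{z z̄} = −e^{−2λ}`, i.e. `Δλ = −e^{−4λ}` for the
    -- Laplace–Beltrami operator `Δ = e^{−2λ}(∂²/∂x² + ∂²/∂y²)` of `e^{2λ}(dx²+dy²)`.
    ∀ z ∈ Ω, lapl lam z.re z.im = -Real.exp (-2 * lam z.re z.im) := by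
  intro z hz
  have han : AnalyticOnNhd ℂ g Ω := hg.analyticOnNhd hΩ
  have hd0 : ∀ w ∈ Ω, HasDerivAt g (deriv g w) w :=
    fun w hw => (han w hw).differentiableAt.hasDerivAt
  have hd1 : ∀ w ∈ Ω, HasDerivAt (deriv g) (deriv (deriv g) w) w :=
    fun w hw => (han.deriv w hw).differentiableAt.hasDerivAt
  have hd2 : ∀ w ∈ Ω, HasDerivAt (deriv (deriv g)) (deriv (deriv (deriv g)) w) w :=
    fun w hw => (han.deriv.deriv w hw).differentiableAt.hasDerivAt
  have ha : ∀ w ∈ Ω, Complex.normSq (g w) ≠ 1 := by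
    intro w hw h
    exact hg1 w hw (by rw [Complex.norm_def, h, Real.sqrt_one])
  -- x-direction
  have hx : deriv (fun s => deriv (fun t => lam t z.im) s) z.re
      = F2v (g z) (deriv g z) (deriv (deriv g) z) (deriv (deriv (deriv g)) z) 1 := by
    have hzeq : ((z.im : ℂ) * Complex.I) + (z.re : ℂ) * 1 = z := by
      rw [mul_one, add_comm, Complex.re_add_im]
    have hfunx : (fun t : ℝ => lam t z.im)
        = fun t : ℝ => uuv (g (((z.im : ℂ) * Complex.I) + (t : ℂ) * 1))
            (deriv g (((z.im : ℂ) * Complex.I) + (t : ℂ) * 1)) := by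
      funext t
      have harg : ((t : ℂ)) + (z.im : ℂ) * Complex.I
          = ((z.im : ℂ) * Complex.I) + (t : ℂ) * 1 := by ring
      rw [hlam]
      simp only [uuv]
      rw [harg]
    have hOx : IsOpen {s : ℝ | ((z.im : ℂ) * Complex.I) + (s : ℂ) * 1 ∈ Ω} :=
      hΩ.preimage (by fun_prop)
    have hmemx : z.re ∈ {s : ℝ | ((z.im : ℂ) * Complex.I) + (s : ℂ) * 1 ∈ Ω} := by
      simp only [Set.mem_setOf_eq, hzeq]; exact hz
    have hevx : (fun s : ℝ => deriv (fun t : ℝ => lam t z.im) s) =ᶠ[nhds z.re]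
        fun s : ℝ => F1v (g (((z.im : ℂ) * Complex.I) + (s : ℂ) * 1))
          (deriv g (((z.im : ℂ) * Complex.I) + (s : ℂ) * 1))
          (deriv (deriv g) (((z.im : ℂ) * Complex.I) + (s : ℂ) * 1)) 1 := by
      filter_upwards [hOx.mem_nhds hmemx] with s hs
      rw [hfunx]
      exact (hd_uu_curve hΩ hd0 hd1 hg' ha hs).deriv
    rw [hevx.deriv_eq]
    have h2 := (hd_F1_curve hd0 hd1 hd2 hg' ha hmemx).deriv
    rw [hzeq] at h2
    exact h2
  -- y-direction
  have hy : deriv (fun s => deriv (fun t => lam z.re t) s) z.im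
      = F2v (g z) (deriv g z) (deriv (deriv g) z) (deriv (deriv (deriv g)) z) Complex.I := by
    have hzeq : ((z.re : ℂ)) + (z.im : ℂ) * Complex.I = z := Complex.re_add_im z
    have hfuny : (fun t : ℝ => lam z.re t)
        = fun t : ℝ => uuv (g (((z.re : ℂ)) + (t : ℂ) * Complex.I))
            (deriv g (((z.re : ℂ)) + (t : ℂ) * Complex.I)) := by
      funext t
      rw [hlam]
      simp only [uuv]
    have hOy : IsOpen {s : ℝ | ((z.re : ℂ)) + (s : ℂ) * Complex.I ∈ Ω} :=
      hΩ.preimage (by fun_prop)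
    have hmemy : z.im ∈ {s : ℝ | ((z.re : ℂ)) + (s : ℂ) * Complex.I ∈ Ω} := by
      simp only [Set.mem_setOf_eq, hzeq]; exact hz
    have hevy : (fun s : ℝ => deriv (fun t : ℝ => lam z.re t) s) =ᶠ[nhds z.im]
        fun s : ℝ => F1v (g (((z.re : ℂ)) + (s : ℂ) * Complex.I))
          (deriv g (((z.re : ℂ)) + (s : ℂ) * Complex.I))
          (deriv (deriv g) (((z.re : ℂ)) + (s : ℂ) * Complex.I)) Complex.I := by
      filter_upwards [hOy.mem_nhds hmemy] with s hs
      rw [hfuny]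
      exact (hd_uu_curve hΩ hd0 hd1 hg' ha hs).deriv
    rw [hevy.deriv_eq]
    have h2 := (hd_F1_curve hd0 hd1 hd2 hg' ha hmemy).deriv
    rw [hzeq] at h2
    exact h2
  have h1 : (1 : ℝ) - Complex.normSq (g z) ≠ 0 := sub_ne_zero.mpr (Ne.symm (ha z hz))
  have h2 : Complex.normSq (deriv g z) ≠ 0 := (Complex.normSq_pos.mpr (hg' z hz)).ne'
  have hsum := F2v_sum (g z) (deriv g z) (deriv (deriv g) z) (deriv (deriv (deriv g)) z) h1 h2
  have hRpos : (0:ℝ) < (1 - Complex.normSq (g z)) ^ 2 / (4 * Complex.normSq (deriv g z)) := by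
    have hnum : (0:ℝ) < (1 - Complex.normSq (g z)) ^ 2 :=
      (sq_nonneg _).lt_of_ne (Ne.symm (pow_ne_zero 2 h1))
    have hden : (0:ℝ) < 4 * Complex.normSq (deriv g z) := by
      have := (Complex.normSq_pos.mpr (hg' z hz)); positivity
    exact div_pos hnum hden
  have hrhs : -Real.exp (-2 * lam z.re z.im)
      = -(4 * Complex.normSq (deriv g z) / (1 - Complex.normSq (g z)) ^ 2) := by
    rw [hlam, Complex.re_add_im]
    rw [show (-2 : ℝ) * ((1 / 2) * Real.log ((1 - Complex.normSq (g z)) ^ 2 /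
        (4 * Complex.normSq (deriv g z))))
      = -Real.log ((1 - Complex.normSq (g z)) ^ 2 / (4 * Complex.normSq (deriv g z))) by ring]
    rw [Real.exp_neg, Real.exp_log hRpos, inv_div]
  rw [hrhs]
  simp only [lapl]
  rw [hx, hy, hsum]
end
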